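/- Let C = D ⊕ E be a direct sum of coalgebras over a field k, where D = k·g is a one-dimensional coalgebra with Δ(g) = g⊗g, ε(g)=1, and E is a matrix coalgebra of rank n with basis (e_{ij}) satisfying Δ(e_{ij}) = Σ_k e_{ik} ⊗ e_{kj}, ε(e_{ij}) = δ_{ij}. If elements x₁,…,x_n ∈ C satisfy Δ(x_i) = x_i ⊗ g + Σ_j e_{ij} ⊗ x_j for all i, then there exist scalars a₁,…,a_n ∈ k with x_i = a_i g − Σ_j a_j e_{ij} for all i. -/

import Mathlib

open Coalgebra TensorProduct

/-!
Let `γ` be the coordinate functional of `g` in the basis `g, e i j`. Since `g` is group-like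
and `Δ(e i j)` has no tensor factor `g` on the right, `(id ⊗ γ) ∘ Δ` is `y ↦ γ y • g`.
Applying `id ⊗ γ` to `Δ(x i) = x i ⊗ g + Σ_j e i j ⊗ x j` therefore gives
`γ (x i) • g = x i + Σ_j γ (x j) • e i j`, which is the claim with `a = γ ∘ x`.
-/

theorem rid_lTensor_comul_eq_smul {R C ι : Type*} [CommSemiring R] [AddCommMonoid C]
    [Module R C] [Coalgebra R C] [Fintype ι] (g : C) (e : ι → ι → C) (γ : C →ₗ[R] R)
    (hg : comul (R := R) g = g ⊗ₜ[R] g)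
    (he : ∀ i j, comul (R := R) (e i j) = ∑ l, e i l ⊗ₜ[R] e l j)
    (hγg : γ g = 1) (hγe : ∀ i j, γ (e i j) = 0)
    (hspan : Submodule.span R (Set.range
      (Sum.elim (fun _ : Unit => g) (fun q : ι × ι => e q.1 q.2))) = ⊤) (y : C) :
    TensorProduct.rid R C (γ.lTensor C (comul y)) = γ y • g := by
  suffices h : (TensorProduct.rid R C).toLinearMap ∘ₗ γ.lTensor C ∘ₗ comul =
      γ.smulRight g from congrArg (· y) h
  refine LinearMap.ext_on hspan ?_
  rintro _ ⟨(_ | ⟨i, j⟩), rfl⟩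
  · simp [hg, hγg]
  · simp [he, hγe]

theorem stmt2_general (k C : Type*) [Field k] [AddCommGroup C] [Module k C]
    [Coalgebra k C] (n : ℕ) (g : C) (e : Fin n → Fin n → C)
    (hg : comul (R := k) g = g ⊗ₜ[k] g)
    (he : ∀ i j, comul (R := k) (e i j) = ∑ l, e i l ⊗ₜ[k] e l j)
    (hli : LinearIndependent k
      (Sum.elim (fun _ : Unit => g) (fun q : Fin n × Fin n => e q.1 q.2)))
    (hspan : Submodule.span k (Set.range
      (Sum.elim (fun _ : Unit => g) (fun q : Fin n × Fin n => e q.1 q.2))) = ⊤)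
    (x : Fin n → C)
    (hx : ∀ i, comul (R := k) (x i) = x i ⊗ₜ[k] g + ∑ j, e i j ⊗ₜ[k] x j) :
    ∃ a : Fin n → k, ∀ i, x i = a i • g - ∑ j, a j • e i j := by
  let b := Module.Basis.mk hli hspan.ge
  let γ := b.coord (Sum.inl ())
  have hγg : γ g = 1 := by
    simpa [b, γ] using b.repr_self_apply (Sum.inl ()) (Sum.inl ())
  have hγe : ∀ i j, γ (e i j) = 0 := fun i j => by
    simpa [b, γ] using b.repr_self_apply (Sum.inr (i, j)) (Sum.inl ())
  refine ⟨fun i => γ (x i), fun i => eq_sub_of_add_eq ?_⟩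
  have h := congrArg (fun t => TensorProduct.rid k C (γ.lTensor C t)) (hx i)
  simp only [rid_lTensor_comul_eq_smul g e γ hg he hγg hγe hspan, map_add, map_sum,
    LinearMap.lTensor_tmul, TensorProduct.rid_tmul, hγg, one_smul] at h
  exact h.symm

/-- Lemma 2.2 of the paper: in a coalgebra `C = D ⊕ E` with `D = k·g` group-like
and `E` a rank `n` matrix coalgebra with basis `(e i j)`, if elements `x i`
satisfy `Δ(x i) = x i ⊗ g + Σ_j e i j ⊗ x j`, then there are scalars `a i`
with `x i = a i • g − Σ_j a j • e i j`. The direct sum decomposition is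
encoded by requiring that `g` together with the `e i j` form a basis of `C`. -/
theorem stmt2 (k C : Type*) [Field k] [AddCommGroup C] [Module k C]
    [Coalgebra k C] (n : ℕ) (g : C) (e : Fin n → Fin n → C)
    (hg : comul (R := k) g = g ⊗ₜ[k] g) (hεg : counit (R := k) g = 1)
    (he : ∀ i j, comul (R := k) (e i j) = ∑ l, e i l ⊗ₜ[k] e l j)
    (hεe : ∀ i j, counit (R := k) (e i j) = if i = j then (1 : k) else 0)
    (hli : LinearIndependent k
      (Sum.elim (fun _ : Unit => g) (fun q : Fin n × Fin n => e q.1 q.2)))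
    (hspan : Submodule.span k (Set.range
      (Sum.elim (fun _ : Unit => g) (fun q : Fin n × Fin n => e q.1 q.2))) = ⊤)
    (x : Fin n → C)
    (hx : ∀ i, comul (R := k) (x i) = x i ⊗ₜ[k] g + ∑ j, e i j ⊗ₜ[k] x j) :
    ∃ a : Fin n → k, ∀ i, x i = a i • g - ∑ j, a j • e i j :=
  stmt2_general k C n g e hg he hli hspan x hx
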